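/- Let d = ((d_i^+, d_i^-))_{i=1}^N be a digraphic integer-pair sequence and suppose there exist three distinct coordinates such that in every realization G ∈ R(d) the corresponding three vertices induce a directed 3-cycle. Then there exist distinct coordinates j_1, j_2, j_3 and an integer pair (k,l) with k ≥ 1 and l ≥ 1 such that: (1) d_{j_1} = d_{j_2} = d_{j_3} = (k,l); (2) in the positive lexicographical ordering d̄ of d, coordinates l, l+1, l+2 equal (k,l), and in the negative lexicographical ordering d̲ of d, coordinates k, k+1, k+2 equal (k,l); and (3) the slack sequences satisfy (s̄_{l-1}, s̄_l, s̄_{l+1}, s̄_{l+2}) = (0,1,1,0) and (s̲_{k-1}, s̲_k, s̲_{k+1}, s̲_{k+2}) = (0,1,1,0). -/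

import Mathlib

structure SDigraph (V : Type) where
  Adj : V → V → Bool
  irrefl : ∀ v, Adj v v = false

/-- Out-degree of a vertex. -/
def SDigraph.outDeg {V : Type} [Fintype V] [DecidableEq V]
    (G : SDigraph V) (v : V) : ℕ :=
  (Finset.univ.filter fun x => G.Adj v x = true).card

/-- In-degree of a vertex. -/
def SDigraph.inDeg {V : Type} [Fintype V] [DecidableEq V]
    (G : SDigraph V) (v : V) : ℕ :=
  (Finset.univ.filter fun x => G.Adj x v = true).card

/-- `G` realizes the integer-pair (degree) sequence `d`: vertex `v` has
out-degree `(d v).1` and in-degree `(d v).2`. -/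
def Realizes {V : Type} [Fintype V] [DecidableEq V]
    (G : SDigraph V) (d : V → ℕ × ℕ) : Prop :=
  ∀ v, G.outDeg v = (d v).1 ∧ G.inDeg v = (d v).2

/-- `H` is obtained from `G` by a single 2-switch: arcs `(v₁,v₂)`, `(v₃,v₄)`
are replaced by `(v₁,v₄)`, `(v₃,v₂)`, allowed only when the four vertices
are distinct, the former two are arcs and the latter two are not. -/
def TwoSwitch {V : Type} [DecidableEq V] (G H : SDigraph V) : Prop :=
  ∃ v₁ v₂ v₃ v₄ : V,
    v₁ ≠ v₂ ∧ v₁ ≠ v₃ ∧ v₁ ≠ v₄ ∧ v₂ ≠ v₃ ∧ v₂ ≠ v₄ ∧ v₃ ≠ v₄ ∧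
    G.Adj v₁ v₂ = true ∧ G.Adj v₃ v₄ = true ∧
    G.Adj v₁ v₄ = false ∧ G.Adj v₃ v₂ = false ∧
    ∀ x y, H.Adj x y =
      if (x = v₁ ∧ y = v₂) ∨ (x = v₃ ∧ y = v₄) then false
      else if (x = v₁ ∧ y = v₄) ∨ (x = v₃ ∧ y = v₂) then true
      else G.Adj x y

/-- `G` and `H` differ by a single 2-switch (in either direction). -/
def TwoSwitchStep {V : Type} [DecidableEq V] (G H : SDigraph V) : Prop :=
  TwoSwitch G H ∨ TwoSwitch H G

/-- `H` is reachable from `G` by a finite sequence of 2-switches. -/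
def Reach2 {V : Type} [DecidableEq V] (G H : SDigraph V) : Prop :=
  Relation.ReflTransGen TwoSwitchStep G H

/-- `H` is obtained from `G` by reorienting an induced directed 3-cycle:
there are distinct `u v w` with arcs `(u,v),(v,w),(w,u)` and no arcs
`(v,u),(w,v),(u,w)`, and `H` replaces these three arcs by the reversed ones. -/
def CycleReorient {V : Type} [DecidableEq V] (G H : SDigraph V) : Prop :=
  ∃ u v w : V, u ≠ v ∧ v ≠ w ∧ u ≠ w ∧
    G.Adj u v = true ∧ G.Adj v w = true ∧ G.Adj w u = true ∧
    G.Adj v u = false ∧ G.Adj w v = false ∧ G.Adj u w = false ∧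
    ∀ x y, H.Adj x y =
      if (x = u ∨ x = v ∨ x = w) ∧ (y = u ∨ y = v ∨ y = w) then G.Adj y x
      else G.Adj x y

/-- The three vertices `u, v, w` induce a directed 3-cycle in `G`: the induced
subgraph on them consists of exactly the three arcs of one cyclic orientation. -/
def InducesC3 {V : Type} (G : SDigraph V) (u v w : V) : Prop :=
  (G.Adj u v = true ∧ G.Adj v w = true ∧ G.Adj w u = true ∧
    G.Adj v u = false ∧ G.Adj w v = false ∧ G.Adj u w = false) ∨
  (G.Adj v u = true ∧ G.Adj w v = true ∧ G.Adj u w = true ∧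
    G.Adj u v = false ∧ G.Adj v w = false ∧ G.Adj w u = false)

/-- The digraph obtained from `G` by reversing all arcs among `{u, v, w}`
(and leaving all other arcs unchanged).  When `{u,v,w}` induces a directed
3-cycle in `G`, this is exactly the reorientation of that 3-cycle. -/
def flip3 {V : Type} [DecidableEq V] (G : SDigraph V) (u v w : V) : SDigraph V where
  Adj x y :=
    if (x = u ∨ x = v ∨ x = w) ∧ (y = u ∨ y = v ∨ y = w) then G.Adj y x
    else G.Adj x y
  irrefl := by
    intro x
    beta_reduce
    rw [ite_self]
    exact G.irrefl x

/-- The corrected conjugate sequence of an integer sequence `a` (indexed by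
`Fin N`, thought of as positions `1, …, N`), at (1-based) position `k`:
`a''_k = |{i : i < k, a_i ≥ k-1}| + |{i : i > k, a_i ≥ k}|`. -/
def cconj {N : ℕ} (a : Fin N → ℕ) (k : ℕ) : ℕ :=
  (Finset.univ.filter fun i : Fin N => (i : ℕ) + 1 < k ∧ k - 1 ≤ a i).card +
  (Finset.univ.filter fun i : Fin N => k < (i : ℕ) + 1 ∧ k ≤ a i).card

/-- The slack sequence `s̄` of a pair sequence `a` (intended: the positively
ordered sequence `d̄`): `s̄_l = Σ_{i=1}^l [a⁻]''_i − Σ_{i=1}^l a⁺_i`, where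
`a⁺, a⁻` are the first- and second-coordinate sequences.  `s̄_0 = 0`. -/
def slackBar {N : ℕ} (a : Fin N → ℕ × ℕ) (l : ℕ) : ℤ :=
  (∑ i ∈ Finset.range l, (cconj (fun j => (a j).2) (i + 1) : ℤ)) -
  ∑ j ∈ Finset.univ.filter (fun j : Fin N => (j : ℕ) < l), ((a j).1 : ℤ)

/-- The slack sequence `s̲` of a pair sequence `a` (intended: the negatively
ordered sequence `d̲`): `s̲_k = Σ_{i=1}^k [a⁺]''_i − Σ_{i=1}^k a⁻_i`.
`s̲_0 = 0`. -/
def slackUbar {N : ℕ} (a : Fin N → ℕ × ℕ) (k : ℕ) : ℤ :=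
  (∑ i ∈ Finset.range k, (cconj (fun j => (a j).1) (i + 1) : ℤ)) -
  ∑ j ∈ Finset.univ.filter (fun j : Fin N => (j : ℕ) < k), ((a j).2 : ℤ)

/-- `a` is non-increasing in the positive lexicographical order (first
coordinate first, ties broken by the second coordinate). -/
def PosOrdered {N : ℕ} (a : Fin N → ℕ × ℕ) : Prop :=
  ∀ i j : Fin N, i ≤ j →
    (a j).1 < (a i).1 ∨ ((a i).1 = (a j).1 ∧ (a j).2 ≤ (a i).2)

/-- `a` is non-increasing in the negative lexicographical order (second
coordinate first, ties broken by the first coordinate). -/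
def NegOrdered {N : ℕ} (a : Fin N → ℕ × ℕ) : Prop :=
  ∀ i j : Fin N, i ≤ j →
    (a j).2 < (a i).2 ∨ ((a i).2 = (a j).2 ∧ (a j).1 ≤ (a i).1)

/-- `b` is a rearrangement (permutation) of the sequence `a`. -/
def IsRearrangement {N : ℕ} (a b : Fin N → ℕ × ℕ) : Prop :=
  ∃ σ : Equiv.Perm (Fin N), ∀ i, b i = a (σ i)

/-!
Fix a realization `G` of `d` in which the forced triangle is oriented `a → b → c → a`. A 2-switch
preserves all degrees, so no 2-switch of `G` may destroy the triangle. This forces every vertex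
outside the triangle to be joined to `a`, `b`, `c` in the same way, every outside in-neighbour of
the triangle to dominate every outside out-neighbour, and every other outside arc to leave the
in-neighbourhood `I` or to enter the out-neighbourhood. Hence `d a = d b = d c = (k, l)` with
`|I| = l - 1`, the vertices above `(k, l)` in the lexicographic order are exactly those of `I`, and
only `a, b, c` equal `(k, l)`; so `a, b, c` occupy positions `l, l + 1, l + 2` of `d̄`.

Counting arcs twice writes `s̄_m` as the sum over all vertices `v` of
`min (d⁻ v) |T \ {v}| - |N⁻(v) ∩ T|`, where `T` is the set of the first `m` vertices of `d̄`.
For `I ⊆ T ⊆ I ∪ {a, b, c}` every summand outside the triangle vanishes, and the triangle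
contributes `0, 1, 1, 0` as `T` picks up `0, 1, 2, 3` of its vertices. The statement about `d̲` is
the same statement for the reversed digraph.
-/

open Finset

namespace SDigraph

variable {V : Type}

def rev (G : SDigraph V) : SDigraph V where
  Adj x y := G.Adj y x
  irrefl := G.irrefl

theorem ne_of_adj (G : SDigraph V) {x y : V} (h : G.Adj x y = true) : x ≠ y := by
  rintro rfl
  simp [G.irrefl] at h

def switch [DecidableEq V] (G : SDigraph V) (v₁ v₂ v₃ v₄ : V) (h₁₄ : v₁ ≠ v₄) (h₃₂ : v₃ ≠ v₂) :
    SDigraph V where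
  Adj x y :=
    if (x = v₁ ∧ y = v₂) ∨ (x = v₃ ∧ y = v₄) then false
    else if (x = v₁ ∧ y = v₄) ∨ (x = v₃ ∧ y = v₂) then true
    else G.Adj x y
  irrefl x := by
    split_ifs with h₁ h₂
    · rfl
    · rcases h₂ with ⟨rfl, rfl⟩ | ⟨rfl, rfl⟩ <;> simp_all
    · exact G.irrefl x

variable [Fintype V] [DecidableEq V]

def succsOutside (G : SDigraph V) (U : Finset V) (v : V) : Finset V :=
  Uᶜ.filter fun x => G.Adj v x = true

def predsOutside (G : SDigraph V) (U : Finset V) (v : V) : Finset V :=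
  Uᶜ.filter fun x => G.Adj x v = true

def deficit (G : SDigraph V) (T : Finset V) (v : V) : ℤ :=
  ((min (G.inDeg v) (T.erase v).card : ℕ) : ℤ) - (T.filter fun x => G.Adj x v = true).card

theorem deficit_eq_zero_of_forall_adj {G : SDigraph V} {T : Finset V} {v : V}
    (hT : ∀ x ∈ T, x ≠ v → G.Adj x v = true) : G.deficit T v = 0 := by
  have hfilter : (T.filter fun x => G.Adj x v = true) = T.erase v := by
    ext x
    simp only [mem_filter, mem_erase]
    constructor
    · rintro ⟨hx, hxv⟩; exact ⟨G.ne_of_adj hxv, hx⟩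
    · rintro ⟨hxv, hx⟩; exact ⟨hx, hT x hx hxv⟩
  have hle : (T.erase v).card ≤ G.inDeg v := by
    rw [← hfilter]; exact card_le_card (filter_subset_filter _ (subset_univ T))
  rw [deficit, hfilter, min_eq_right hle, sub_self]

theorem deficit_eq_zero_of_adj_mem {G : SDigraph V} {T : Finset V} {v : V}
    (hT : ∀ x, G.Adj x v = true → x ∈ T) : G.deficit T v = 0 := by
  have hfilter : (T.filter fun x => G.Adj x v = true) = univ.filter fun x => G.Adj x v = true :=
    (filter_subset_filter _ (subset_univ T)).antisymm fun x hx =>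
      mem_filter.2 ⟨hT x (mem_filter.1 hx).2, (mem_filter.1 hx).2⟩
  have hle : G.inDeg v ≤ (T.erase v).card := by
    refine card_le_card fun x hx => mem_erase.2 ⟨G.ne_of_adj (mem_filter.1 hx).2, ?_⟩
    exact hT x (mem_filter.1 hx).2
  rw [deficit, hfilter, min_eq_left hle, ← inDeg, sub_self]

theorem disjoint_predsOutside (G : SDigraph V) {U S : Finset V} (v : V) (hS : S ⊆ U) :
    Disjoint (G.predsOutside U v) S :=
  disjoint_left.2 fun _ hx hxS => (mem_compl.1 (mem_filter.1 hx).1) (hS hxS)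

end SDigraph

theorem Realizes.of_twoSwitch {V : Type} [Fintype V] [DecidableEq V] {G H : SDigraph V}
    {d : V → ℕ × ℕ} (hG : Realizes G d) (hGH : TwoSwitch G H) : Realizes H d := by
  obtain ⟨v₁, v₂, v₃, v₄, h₁₂, h₁₃, h₁₄, h₂₃, h₂₄, h₃₄, a₁₂, a₃₄, a₁₄, a₃₂, hH⟩ := hGH
  have key : ∀ x y, ((if H.Adj x y then 1 else 0) + (if x = v₁ then if y = v₂ then 1 else 0 else 0)
      + (if x = v₃ then if y = v₄ then 1 else 0 else 0) : ℕ)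
      = (if G.Adj x y then 1 else 0) + (if x = v₁ then if y = v₄ then 1 else 0 else 0)
      + (if x = v₃ then if y = v₂ then 1 else 0 else 0) := by
    intro x y
    rw [hH]
    by_cases hx₁ : x = v₁ <;> by_cases hx₃ : x = v₃ <;> by_cases hy₂ : y = v₂ <;>
      by_cases hy₄ : y = v₄ <;> simp_all
  intro v
  rw [← (hG v).1, ← (hG v).2]
  constructor
  · have := congrArg (fun f : V → ℕ => ∑ y, f y) (funext (key v))
    simp only [sum_add_distrib, sum_ite_irrel, sum_ite_eq', mem_univ, ite_true,
      sum_const_zero] at this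
    simp only [SDigraph.outDeg, card_filter]
    omega
  · have := congrArg (fun f : V → ℕ => ∑ x, f x) (funext (key · v))
    simp only [sum_add_distrib, sum_ite_eq', mem_univ, ite_true] at this
    simp only [SDigraph.inDeg, card_filter]
    omega

theorem sum_range_cconj {N : ℕ} (x : Fin N → ℕ) (m : ℕ) :
    ∑ t ∈ range m, cconj x (t + 1)
      = ∑ j : Fin N, if (j : ℕ) < m then min (x j) (m - 1) else min (x j) m := by
  have hlow : ∀ j : Fin N, ((range m).filter fun t => (j : ℕ) + 1 < t + 1 ∧ t + 1 - 1 ≤ x j)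
      = Ioc (j : ℕ) (min (x j) (m - 1)) := by
    intro j; ext t; simp only [mem_filter, mem_range, mem_Ioc]; omega
  have hhigh : ∀ j : Fin N, ((range m).filter fun t => t + 1 < (j : ℕ) + 1 ∧ t + 1 ≤ x j)
      = range (min (j : ℕ) (min (x j) m)) := by
    intro j; ext t; simp only [mem_filter, mem_range]; omega
  simp only [cconj, card_filter, ← sum_add_distrib]
  rw [sum_comm]
  refine sum_congr rfl fun j _ => ?_
  rw [sum_add_distrib, ← card_filter, ← card_filter, hlow, hhigh, Nat.card_Ioc, card_range]
  split_ifs <;> omega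

theorem card_filter_perm_symm_lt {N : ℕ} (σ : Equiv.Perm (Fin N)) {m : ℕ} (hm : m ≤ N) :
    (univ.filter fun v => (σ.symm v : ℕ) < m).card = m := by
  rw [card_equiv σ.symm (t := univ.filter fun j : Fin N => (j : ℕ) < m) (by simp),
    Fin.card_filter_val_lt, min_eq_right hm]

theorem slackBar_comp_perm_eq_sum_deficit {N : ℕ} {G : SDigraph (Fin N)} {d : Fin N → ℕ × ℕ}
    (hG : Realizes G d) (σ : Equiv.Perm (Fin N)) {m : ℕ} (hm : m ≤ N) :
    slackBar (fun j => d (σ j)) m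
      = ∑ v, G.deficit (univ.filter fun v => (σ.symm v : ℕ) < m) v := by
  set T := univ.filter fun v => (σ.symm v : ℕ) < m
  have hT : T.card = m := card_filter_perm_symm_lt σ hm
  have hin : ∑ t ∈ range m, (cconj (fun j => (d (σ j)).2) (t + 1) : ℤ)
      = ∑ v, ((min (G.inDeg v) (T.erase v).card : ℕ) : ℤ) := by
    rw [← Nat.cast_sum, sum_range_cconj, Nat.cast_sum]
    conv_rhs => rw [← Equiv.sum_comp σ]
    refine sum_congr rfl fun j _ => ?_
    have hmem : σ j ∈ T ↔ (j : ℕ) < m := by simp [T]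
    rw [(hG (σ j)).2]
    split_ifs with hj
    · rw [card_erase_of_mem (hmem.2 hj), hT]
    · rw [erase_eq_of_notMem (mt hmem.1 hj), hT]
  have hout : ∑ j ∈ univ.filter (fun j : Fin N => (j : ℕ) < m), ((d (σ j)).1 : ℤ)
      = ∑ v, ((T.filter fun x => G.Adj x v = true).card : ℤ) := by
    rw [sum_equiv σ (t := T) (g := fun u => (G.outDeg u : ℤ)) (by simp [T])
      (fun j _ => by rw [(hG (σ j)).1])]
    simp only [SDigraph.outDeg, card_filter, Nat.cast_sum]
    exact sum_comm
  rw [slackBar, hin, hout, ← sum_sub_distrib]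
  rfl

theorem posOrdered_iff_antitone {N : ℕ} (x : Fin N → ℕ × ℕ) :
    PosOrdered x ↔ Antitone fun j => toLex (x j) :=
  forall₂_congr fun _ _ => imp_congr_right fun _ => Prod.Lex.toLex_ge_toLex.symm

theorem exists_perm_antitone_comp {n : ℕ} {α : Type} [LinearOrder α] (f : Fin n → α) :
    ∃ σ : Equiv.Perm (Fin n), Antitone fun j => f (σ j) :=
  ⟨_, monotone_toDual_comp_iff.1 (Tuple.monotone_sort fun v => OrderDual.toDual (f v))⟩

theorem sum_min_one_sub_card_filter_of_cycle {V : Type} [DecidableEq V] {G : SDigraph V}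
    {a b c : V} (hab : G.Adj a b = true) (hbc : G.Adj b c = true) (hca : G.Adj c a = true)
    (hba : G.Adj b a = false) (hcb : G.Adj c b = false) (hac : G.Adj a c = false)
    {S : Finset V} (hS : S ⊆ {a, b, c}) :
    ∑ v ∈ ({a, b, c} : Finset V),
        (((min 1 (S.erase v).card : ℕ) : ℤ) - (S.filter fun x => G.Adj x v = true).card)
      = if S.card = 1 ∨ S.card = 2 then 1 else 0 := by
  have h₁ := G.ne_of_adj hab
  have h₂ := G.ne_of_adj hbc
  have h₃ := G.ne_of_adj hca
  rw [sum_insert (by simp [h₁, h₃.symm]), sum_insert (by simp [h₂]), sum_singleton,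
    ← inter_eq_right.2 hS, ← filter_mem_eq_inter]
  by_cases ha : a ∈ S <;> by_cases hb : b ∈ S <;> by_cases hc : c ∈ S <;>
    simp [filter_insert, filter_singleton, ha, hb, hc, h₁, h₂, h₃, h₁.symm, h₂.symm, h₃.symm,
      hab, hbc, hca, hba, hcb, hac, G.irrefl]

theorem Finset.insert_rotate {α : Type} [DecidableEq α] (a b c : α) :
    ({b, c, a} : Finset α) = {a, b, c} := by
  ext; simp only [mem_insert, mem_singleton]; tauto

theorem InducesC3.rotate {V : Type} {G : SDigraph V} {a b c : V} (h : InducesC3 G a b c) :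
    InducesC3 G b c a := by
  unfold InducesC3 at *
  tauto

structure ForcedTriangle {N : ℕ} (d : Fin N → ℕ × ℕ) (G : SDigraph (Fin N)) (a b c : Fin N) :
    Prop where
  realizes : Realizes G d
  rigid : ∀ H : SDigraph (Fin N), Realizes H d → InducesC3 H a b c
  ab : G.Adj a b = true
  bc : G.Adj b c = true
  ca : G.Adj c a = true

namespace ForcedTriangle

variable {N : ℕ} {d : Fin N → ℕ × ℕ} {G : SDigraph (Fin N)} {a b c : Fin N}

theorem rotate (h : ForcedTriangle d G a b c) : ForcedTriangle d G b c a :=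
  ⟨h.realizes, fun H hH => (h.rigid H hH).rotate, h.bc, h.ca, h.ab⟩

theorem ba (h : ForcedTriangle d G a b c) : G.Adj b a = false := by
  have := h.ab
  rcases h.rigid G h.realizes with h' | h' <;> simp_all

theorem ne_ab (h : ForcedTriangle d G a b c) : a ≠ b := G.ne_of_adj h.ab

theorem ne_bc (h : ForcedTriangle d G a b c) : b ≠ c := G.ne_of_adj h.bc

theorem ne_ac (h : ForcedTriangle d G a b c) : a ≠ c := (G.ne_of_adj h.ca).symm

theorem card_triangle (h : ForcedTriangle d G a b c) :
    ({a, b, c} : Finset (Fin N)).card = 3 := by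
  rw [card_insert_of_notMem (by simp [h.ne_ab, h.ne_ac]),
    card_insert_of_notMem (by simp [h.ne_bc]), card_singleton]

theorem switch_inducesC3 (h : ForcedTriangle d G a b c) {v₁ v₂ v₃ v₄ : Fin N}
    (h₁₂ : v₁ ≠ v₂) (h₁₃ : v₁ ≠ v₃) (h₁₄ : v₁ ≠ v₄) (h₂₃ : v₂ ≠ v₃) (h₂₄ : v₂ ≠ v₄)
    (h₃₄ : v₃ ≠ v₄) (a₁₂ : G.Adj v₁ v₂ = true) (a₃₄ : G.Adj v₃ v₄ = true)
    (a₁₄ : G.Adj v₁ v₄ = false) (a₃₂ : G.Adj v₃ v₂ = false) :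
    InducesC3 (G.switch v₁ v₂ v₃ v₄ h₁₄ h₂₃.symm) a b c :=
  h.rigid _ (h.realizes.of_twoSwitch
    ⟨v₁, v₂, v₃, v₄, h₁₂, h₁₃, h₁₄, h₂₃, h₂₄, h₃₄, a₁₂, a₃₄, a₁₄, a₃₂, fun _ _ => rfl⟩)

theorem adj_from_b_of_adj_from_a (h : ForcedTriangle d G a b c) {x : Fin N} (hxb : x ≠ b)
    (hax : G.Adj a x = true) : G.Adj b x = true := by
  -- otherwise the switch `a → x, b → c ⇝ a → c, b → x` leaves `b` and `c` non-adjacent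
  by_contra hbx
  rw [Bool.not_eq_true] at hbx
  have hxc : x ≠ c := by rintro rfl; simp [h.rotate.rotate.ba] at hax
  have := h.switch_inducesC3 (G.ne_of_adj hax) h.ne_ab h.ne_ac hxb hxc h.ne_bc hax h.bc
    h.rotate.rotate.ba hbx
  simp [InducesC3, SDigraph.switch, h.ne_ab, h.ne_ac, Ne.symm hxb, Ne.symm hxc,
    h.rotate.ba, h.ne_bc] at this

theorem adj_to_c_of_adj_to_a (h : ForcedTriangle d G a b c) {x : Fin N} (hxc : x ≠ c)
    (hxa : G.Adj x a = true) : G.Adj x c = true := by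
  -- otherwise the switch `b → c, x → a ⇝ b → a, x → c` leaves `b` and `c` non-adjacent
  by_contra hxc'
  rw [Bool.not_eq_true] at hxc'
  have hxb : x ≠ b := by rintro rfl; simp [h.ba] at hxa
  have := h.switch_inducesC3 h.ne_bc (Ne.symm hxb) h.ne_ab.symm (Ne.symm hxc)
    h.ne_ac.symm (G.ne_of_adj hxa) h.bc hxa h.ba hxc'
  simp [InducesC3, SDigraph.switch, h.ne_ab, h.ne_ac, Ne.symm hxb, Ne.symm hxc,
    h.rotate.ba, h.ne_bc, h.ne_bc.symm] at this

theorem adj_from_b (h : ForcedTriangle d G a b c) {x : Fin N}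
    (hx : x ∉ ({a, b, c} : Finset (Fin N))) : G.Adj b x = G.Adj a x := by
  simp only [mem_insert, mem_singleton, not_or] at hx
  apply Bool.eq_iff_iff.2
  exact ⟨fun hbx => h.rotate.rotate.adj_from_b_of_adj_from_a hx.1
    (h.rotate.adj_from_b_of_adj_from_a hx.2.2 hbx), h.adj_from_b_of_adj_from_a hx.2.1⟩

theorem adj_to_b (h : ForcedTriangle d G a b c) {x : Fin N}
    (hx : x ∉ ({a, b, c} : Finset (Fin N))) : G.Adj x b = G.Adj x a := by
  simp only [mem_insert, mem_singleton, not_or] at hx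
  apply Bool.eq_iff_iff.2
  exact ⟨h.rotate.adj_to_c_of_adj_to_a hx.1, fun hxa => h.rotate.rotate.adj_to_c_of_adj_to_a
    hx.2.1 (h.adj_to_c_of_adj_to_a hx.2.2 hxa)⟩

theorem adj_to_a_or_adj_from_a (h : ForcedTriangle d G a b c) {x y : Fin N}
    (hx : x ∉ ({a, b, c} : Finset (Fin N))) (hy : y ∉ ({a, b, c} : Finset (Fin N)))
    (hxy : G.Adj x y = true) : G.Adj x a = true ∨ G.Adj a y = true := by
  -- otherwise the switch `a → b, x → y ⇝ a → y, x → b` leaves `a` and `b` non-adjacent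
  by_contra! hcon
  simp only [ne_eq, Bool.not_eq_true] at hcon
  have hxb : G.Adj x b = false := (h.adj_to_b hx).trans hcon.1
  simp only [mem_insert, mem_singleton, not_or] at hx hy
  have := h.switch_inducesC3 h.ne_ab (Ne.symm hx.1) (Ne.symm hy.1) (Ne.symm hx.2.1)
    (Ne.symm hy.2.1) (G.ne_of_adj hxy) h.ab hxy hcon.2 hxb
  simp [InducesC3, SDigraph.switch, h.ne_ab, h.ne_ab.symm, Ne.symm hy.1, Ne.symm hx.2.1,
    h.ba] at this

theorem adj_of_adj_to_a_of_adj_from_a (h : ForcedTriangle d G a b c) {x y : Fin N}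
    (hx : x ∉ ({a, b, c} : Finset (Fin N))) (hy : y ∉ ({a, b, c} : Finset (Fin N)))
    (hxy : x ≠ y) (hxa : G.Adj x a = true) (hay : G.Adj a y = true) : G.Adj x y = true := by
  -- otherwise the switch `b → y, x → a ⇝ b → a, x → y` joins `a` and `b` both ways
  by_contra hxy'
  rw [Bool.not_eq_true] at hxy'
  have hby : G.Adj b y = true := (h.adj_from_b hy).trans hay
  simp only [mem_insert, mem_singleton, not_or] at hx hy
  have := h.switch_inducesC3 (Ne.symm hy.2.1) (Ne.symm hx.2.1) h.ne_ab.symm (Ne.symm hxy)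
    hy.1 hx.1 hby hxa h.ba hxy'
  simp [InducesC3, SDigraph.switch, h.ne_ab, h.ne_ab.symm, Ne.symm hx.1, Ne.symm hx.2.1,
    Ne.symm hy.1, Ne.symm hy.2.1, h.ab] at this

theorem adj_from_c (h : ForcedTriangle d G a b c) {x : Fin N}
    (hx : x ∉ ({a, b, c} : Finset (Fin N))) : G.Adj c x = G.Adj a x := by
  rw [h.rotate.adj_from_b (by rwa [insert_rotate]), h.adj_from_b hx]

theorem adj_to_c (h : ForcedTriangle d G a b c) {x : Fin N}
    (hx : x ∉ ({a, b, c} : Finset (Fin N))) : G.Adj x c = G.Adj x a := by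
  rw [h.rotate.adj_to_b (by rwa [insert_rotate]), h.adj_to_b hx]

theorem outDeg_eq (h : ForcedTriangle d G a b c) :
    G.outDeg a = (G.succsOutside {a, b, c} a).card + 1 := by
  have hnb : b ∉ G.succsOutside {a, b, c} a := by simp [SDigraph.succsOutside]
  rw [SDigraph.outDeg, ← card_insert_of_notMem hnb]
  congr 1
  ext y
  by_cases hya : y = a
  · subst hya; simp [SDigraph.succsOutside, G.irrefl, h.ne_ab]
  by_cases hyc : y = c
  · subst hyc; simp [SDigraph.succsOutside, h.rotate.rotate.ba, h.ne_bc.symm]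
  by_cases hyb : y = b <;> simp [SDigraph.succsOutside, hya, hyb, hyc, h.ab]

theorem inDeg_eq (h : ForcedTriangle d G a b c) :
    G.inDeg a = (G.predsOutside {a, b, c} a).card + 1 := by
  have hnc : c ∉ G.predsOutside {a, b, c} a := by simp [SDigraph.predsOutside]
  rw [SDigraph.inDeg, ← card_insert_of_notMem hnc]
  congr 1
  ext y
  by_cases hya : y = a
  · subst hya; simp [SDigraph.predsOutside, G.irrefl, h.ne_ac]
  by_cases hyb : y = b
  · subst hyb; simp [SDigraph.predsOutside, h.ba, h.ne_bc]
  by_cases hyc : y = c <;> simp [SDigraph.predsOutside, hya, hyb, hyc, h.ca]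

theorem succsOutside_b (h : ForcedTriangle d G a b c) :
    G.succsOutside {a, b, c} b = G.succsOutside {a, b, c} a :=
  filter_congr fun _ hx => by rw [h.adj_from_b (mem_compl.1 hx)]

theorem predsOutside_b (h : ForcedTriangle d G a b c) :
    G.predsOutside {a, b, c} b = G.predsOutside {a, b, c} a :=
  filter_congr fun _ hx => by rw [h.adj_to_b (mem_compl.1 hx)]

theorem predsOutside_c (h : ForcedTriangle d G a b c) :
    G.predsOutside {a, b, c} c = G.predsOutside {a, b, c} a := by
  rw [← insert_rotate a b c, h.rotate.predsOutside_b, insert_rotate a b c, h.predsOutside_b]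

theorem deg_b (h : ForcedTriangle d G a b c) : d b = d a := by
  have hout := h.rotate.outDeg_eq
  have hin := h.rotate.inDeg_eq
  rw [insert_rotate, h.succsOutside_b, ← h.outDeg_eq] at hout
  rw [insert_rotate, h.predsOutside_b, ← h.inDeg_eq] at hin
  exact Prod.ext ((h.realizes b).1.symm.trans (hout.trans (h.realizes a).1))
    ((h.realizes b).2.symm.trans (hin.trans (h.realizes a).2))

theorem deg_eq_of_mem (h : ForcedTriangle d G a b c) {x : Fin N}
    (hx : x ∈ ({a, b, c} : Finset (Fin N))) : d x = d a := by
  simp only [mem_insert, mem_singleton] at hx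
  rcases hx with rfl | rfl | rfl
  exacts [rfl, h.deg_b, h.rotate.deg_b.trans h.deg_b]

theorem card_predsOutside (h : ForcedTriangle d G a b c) :
    (G.predsOutside {a, b, c} a).card + 1 = (d a).2 :=
  h.inDeg_eq.symm.trans (h.realizes a).2

theorem fst_lt_of_mem_predsOutside (h : ForcedTriangle d G a b c) {x : Fin N}
    (hx : x ∈ G.predsOutside {a, b, c} a) : (d a).1 < (d x).1 := by
  obtain ⟨hx, hxa⟩ := mem_filter.1 hx
  rw [mem_compl] at hx
  rw [← (h.realizes a).1, ← (h.realizes x).1, h.outDeg_eq, SDigraph.outDeg]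
  set Out := G.succsOutside {a, b, c} a
  have hsub : {a, b, c} ∪ Out.erase x ⊆ univ.filter fun y => G.Adj x y = true := by
    intro y hy
    simp only [mem_union, mem_insert, mem_singleton, mem_erase] at hy
    rw [mem_filter]
    refine ⟨mem_univ y, ?_⟩
    rcases hy with (rfl | rfl | rfl) | ⟨hyx, hy⟩
    · exact hxa
    · rwa [h.adj_to_b hx]
    · rwa [h.adj_to_c hx]
    · obtain ⟨hy, hay⟩ := mem_filter.1 hy
      exact h.adj_of_adj_to_a_of_adj_from_a hx (mem_compl.1 hy) (Ne.symm hyx) hxa hay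
  have hdisj : Disjoint ({a, b, c} : Finset (Fin N)) (Out.erase x) :=
    disjoint_left.2 fun y hy hy' => (mem_compl.1 (mem_filter.1 (mem_of_mem_erase hy')).1) hy
  have := card_le_card hsub
  rw [card_union_of_disjoint hdisj, h.card_triangle] at this
  have := pred_card_le_card_erase (s := Out) (a := x)
  omega

theorem fst_lt_of_not_adj (h : ForcedTriangle d G a b c) {x : Fin N}
    (hx : x ∉ ({a, b, c} : Finset (Fin N))) (hxa : G.Adj x a = false) :
    (d x).1 < (d a).1 := by
  have hsub : (univ.filter fun y => G.Adj x y = true) ⊆ G.succsOutside {a, b, c} a := by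
    intro y hy
    have hxy := (mem_filter.1 hy).2
    have hy : y ∉ ({a, b, c} : Finset (Fin N)) := by
      simp only [mem_insert, mem_singleton]
      rintro (rfl | rfl | rfl)
      · simp [hxa] at hxy
      · simp [h.adj_to_b hx, hxa] at hxy
      · simp [h.adj_to_c hx, hxa] at hxy
    refine mem_filter.2 ⟨mem_compl.2 hy, ?_⟩
    simpa [hxa] using h.adj_to_a_or_adj_from_a hx hy hxy
  rw [← (h.realizes a).1, ← (h.realizes x).1, h.outDeg_eq]
  exact Nat.lt_succ_of_le (card_le_card hsub)

theorem deficit_a (h : ForcedTriangle d G a b c) {S : Finset (Fin N)}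
    (hS : S ⊆ {a, b, c}) :
    G.deficit (G.predsOutside {a, b, c} a ∪ S) a
      = ((min 1 (S.erase a).card : ℕ) : ℤ) - (S.filter fun x => G.Adj x a = true).card := by
  rw [SDigraph.deficit, h.inDeg_eq]
  set In := G.predsOutside {a, b, c} a
  have hdisj : Disjoint In S := G.disjoint_predsOutside a hS
  have haIn : a ∉ In := by simp [In, SDigraph.predsOutside]
  have herase : (In ∪ S).erase a = In ∪ S.erase a := by
    rw [erase_union_distrib, erase_eq_of_notMem haIn]
  have hfilter : (In ∪ S).filter (fun x => G.Adj x a = true)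
      = In ∪ S.filter fun x => G.Adj x a = true := by
    rw [filter_union, filter_true_of_mem (s := In) fun x hx => (mem_filter.1 hx).2]
  rw [herase, hfilter, card_union_of_disjoint (hdisj.mono_right (erase_subset _ _)),
    card_union_of_disjoint (hdisj.mono_right (filter_subset _ _))]
  push_cast
  omega

theorem deficit_of_mem (h : ForcedTriangle d G a b c) {S : Finset (Fin N)}
    (hS : S ⊆ {a, b, c}) {v : Fin N} (hv : v ∈ ({a, b, c} : Finset (Fin N))) :
    G.deficit (G.predsOutside {a, b, c} a ∪ S) v
      = ((min 1 (S.erase v).card : ℕ) : ℤ) - (S.filter fun x => G.Adj x v = true).card := by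
  simp only [mem_insert, mem_singleton] at hv
  rcases hv with hv | hv | hv <;> subst v
  · exact h.deficit_a hS
  · have := h.rotate.deficit_a (S := S) (by rwa [insert_rotate])
    rwa [insert_rotate, h.predsOutside_b] at this
  · have := h.rotate.rotate.deficit_a (S := S) (by rwa [insert_rotate, insert_rotate])
    rwa [insert_rotate b c a, insert_rotate a b c, h.predsOutside_c] at this

theorem deficit_eq_zero_of_notMem (h : ForcedTriangle d G a b c) {S : Finset (Fin N)}
    (hS : S ⊆ {a, b, c}) {v : Fin N} (hv : v ∉ ({a, b, c} : Finset (Fin N))) :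
    G.deficit (G.predsOutside {a, b, c} a ∪ S) v = 0 := by
  cases hav : G.Adj a v
  · refine SDigraph.deficit_eq_zero_of_adj_mem fun x hxv => mem_union_left _ ?_
    have hx : x ∉ ({a, b, c} : Finset (Fin N)) := by
      simp only [mem_insert, mem_singleton]
      rintro (rfl | rfl | rfl)
      · simp [hav] at hxv
      · simp [h.adj_from_b hv, hav] at hxv
      · simp [h.adj_from_c hv, hav] at hxv
    refine mem_filter.2 ⟨mem_compl.2 hx, ?_⟩
    simpa [hav] using h.adj_to_a_or_adj_from_a hx hv hxv
  · refine SDigraph.deficit_eq_zero_of_forall_adj fun x hx hxv => ?_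
    rcases mem_union.1 hx with hx | hx
    · obtain ⟨hx, hxa⟩ := mem_filter.1 hx
      exact h.adj_of_adj_to_a_of_adj_from_a (mem_compl.1 hx) hv hxv hxa hav
    · have hx := hS hx
      simp only [mem_insert, mem_singleton] at hx
      rcases hx with rfl | rfl | rfl
      · exact hav
      · rwa [h.adj_from_b hv]
      · rwa [h.adj_from_c hv]

theorem sum_deficit (h : ForcedTriangle d G a b c) {S : Finset (Fin N)}
    (hS : S ⊆ {a, b, c}) :
    ∑ v, G.deficit (G.predsOutside {a, b, c} a ∪ S) v
      = if S.card = 1 ∨ S.card = 2 then 1 else 0 := by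
  rw [← sum_subset (subset_univ _) fun v _ hv => h.deficit_eq_zero_of_notMem hS hv,
    sum_congr rfl fun v hv => h.deficit_of_mem hS hv]
  exact sum_min_one_sub_card_filter_of_cycle h.ab h.bc h.ca h.ba h.rotate.ba h.rotate.rotate.ba hS

theorem toLex_le_iff (h : ForcedTriangle d G a b c) {x : Fin N} :
    toLex (d a) ≤ toLex (d x) ↔ x ∈ G.predsOutside {a, b, c} a ∪ {a, b, c} := by
  constructor
  · intro hle
    by_contra hx
    rw [mem_union, not_or] at hx
    have hxa : G.Adj x a = false := by
      rw [SDigraph.predsOutside, mem_filter, not_and] at hx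
      simpa using hx.1 (mem_compl.2 hx.2)
    exact not_lt.2 hle (Prod.Lex.toLex_lt_toLex.2 (Or.inl (h.fst_lt_of_not_adj hx.2 hxa)))
  · intro hx
    rcases mem_union.1 hx with hx | hx
    · exact Prod.Lex.toLex_le_toLex.2 (Or.inl (h.fst_lt_of_mem_predsOutside hx))
    · rw [h.deg_eq_of_mem hx]

theorem toLex_lt_iff (h : ForcedTriangle d G a b c) {x : Fin N} :
    toLex (d a) < toLex (d x) ↔ x ∈ G.predsOutside {a, b, c} a := by
  refine ⟨fun hlt => ?_, fun hx => Prod.Lex.toLex_lt_toLex.2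
    (Or.inl (h.fst_lt_of_mem_predsOutside hx))⟩
  rcases mem_union.1 (h.toLex_le_iff.1 hlt.le) with hx | hx
  · exact hx
  · exact absurd hlt (by rw [h.deg_eq_of_mem hx]; exact lt_irrefl _)

theorem card_predsOutside_union (h : ForcedTriangle d G a b c) :
    (G.predsOutside {a, b, c} a ∪ {a, b, c}).card = (d a).2 + 2 := by
  rw [card_union_of_disjoint (G.disjoint_predsOutside a subset_rfl), h.card_triangle,
    ← h.card_predsOutside]

theorem snd_add_one_lt (h : ForcedTriangle d G a b c) : (d a).2 + 1 < N := by
  have := card_le_univ (G.predsOutside {a, b, c} a ∪ {a, b, c})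
  rw [h.card_predsOutside_union, Fintype.card_fin] at this
  omega

variable {σ : Equiv.Perm (Fin N)}

theorem toLex_lt_comp_iff (h : ForcedTriangle d G a b c)
    (hσ : Antitone fun j => toLex (d (σ j))) (j : Fin N) :
    toLex (d a) < toLex (d (σ j)) ↔ (j : ℕ) < (d a).2 - 1 := by
  rw [← Tuple.lt_card_gt_iff_apply_gt_of_antitone hσ,
    card_equiv σ (t := G.predsOutside {a, b, c} a) fun i => by simp [h.toLex_lt_iff],
    ← h.card_predsOutside, Nat.add_sub_cancel]

theorem toLex_le_comp_iff (h : ForcedTriangle d G a b c)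
    (hσ : Antitone fun j => toLex (d (σ j))) (j : Fin N) :
    toLex (d a) ≤ toLex (d (σ j)) ↔ (j : ℕ) < (d a).2 + 2 := by
  rw [← Tuple.lt_card_ge_iff_apply_ge_of_antitone hσ,
    card_equiv σ (t := G.predsOutside {a, b, c} a ∪ {a, b, c}) fun i => by
      simp [h.toLex_le_iff],
    h.card_predsOutside_union]

theorem deg_comp_eq_of_le_of_lt (h : ForcedTriangle d G a b c)
    (hσ : Antitone fun j => toLex (d (σ j)))
    {j : ℕ} (hj : j < N) (hj₁ : (d a).2 ≤ j + 1) (hj₂ : j < (d a).2 + 2) :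
    d (σ ⟨j, hj⟩) = d a := by
  refine toLex_inj.1 (le_antisymm (not_lt.1 fun hgt => ?_) ((h.toLex_le_comp_iff hσ _).2 hj₂))
  have := (h.toLex_lt_comp_iff hσ _).1 hgt
  simp only at this
  omega

theorem filter_symm_lt_eq (h : ForcedTriangle d G a b c)
    (hσ : Antitone fun j => toLex (d (σ j))) {m : ℕ} (hm₁ : (d a).2 - 1 ≤ m)
    (hm₂ : m ≤ (d a).2 + 2) :
    univ.filter (fun v => (σ.symm v : ℕ) < m)
      = G.predsOutside {a, b, c} a ∪ univ.filter (fun v => (σ.symm v : ℕ) < m) ∩ {a, b, c} := by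
  ext v
  have hlt := h.toLex_lt_comp_iff hσ (σ.symm v)
  have hle := h.toLex_le_comp_iff hσ (σ.symm v)
  simp only [Equiv.apply_symm_apply, h.toLex_lt_iff, h.toLex_le_iff, mem_union] at hlt hle
  simp only [mem_union, mem_inter, mem_filter, mem_univ, true_and]
  constructor
  · intro hv
    by_cases hvIn : v ∈ G.predsOutside {a, b, c} a
    · exact Or.inl hvIn
    · exact Or.inr ⟨hv, (hle.2 (by omega)).resolve_left hvIn⟩
  · rintro (hv | ⟨hv, -⟩)
    · have := hlt.1 hv
      omega
    · exact hv

theorem slackBar_comp_sub_one_add (h : ForcedTriangle d G a b c)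
    (hσ : Antitone fun j => toLex (d (σ j)))
    {i : ℕ} (hi : i ≤ 3) :
    slackBar (fun j => d (σ j)) ((d a).2 - 1 + i) = if i = 1 ∨ i = 2 then 1 else 0 := by
  have hN := h.snd_add_one_lt
  have hl := h.card_predsOutside
  set T := univ.filter fun v => (σ.symm v : ℕ) < (d a).2 - 1 + i
  have hT : T = G.predsOutside {a, b, c} a ∪ T ∩ {a, b, c} :=
    h.filter_symm_lt_eq hσ (m := (d a).2 - 1 + i) (by omega) (by omega)
  have hcard : (T ∩ {a, b, c}).card = i := by
    have : T.card = (d a).2 - 1 + i := card_filter_perm_symm_lt σ (m := (d a).2 - 1 + i) (by omega)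
    rw [hT, card_union_of_disjoint
      ((G.disjoint_predsOutside a subset_rfl).mono_right inter_subset_right)] at this
    omega
  rw [slackBar_comp_perm_eq_sum_deficit h.realizes σ (m := (d a).2 - 1 + i) (by omega)]
  change ∑ v, G.deficit T v = _
  rw [hT, h.sum_deficit inter_subset_right, hcard]

theorem exists_posOrdered (h : ForcedTriangle d G a b c) :
    1 ≤ (d a).2 ∧ ∃ (hN : (d a).2 + 1 < N) (dbar : Fin N → ℕ × ℕ),
      IsRearrangement d dbar ∧ PosOrdered dbar ∧
      dbar ⟨(d a).2 - 1, by omega⟩ = d a ∧ dbar ⟨(d a).2, by omega⟩ = d a ∧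
      dbar ⟨(d a).2 + 1, hN⟩ = d a ∧
      slackBar dbar ((d a).2 - 1) = 0 ∧ slackBar dbar (d a).2 = 1 ∧
      slackBar dbar ((d a).2 + 1) = 1 ∧ slackBar dbar ((d a).2 + 2) = 0 := by
  have hl : 1 ≤ (d a).2 := h.card_predsOutside ▸ Nat.le_add_left 1 _
  have hN := h.snd_add_one_lt
  obtain ⟨σ, hσ⟩ := exists_perm_antitone_comp fun v => toLex (d v)
  have s₀ := h.slackBar_comp_sub_one_add hσ (i := 0) (by norm_num)
  have s₁ := h.slackBar_comp_sub_one_add hσ (i := 1) (by norm_num)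
  have s₂ := h.slackBar_comp_sub_one_add hσ (i := 2) (by norm_num)
  have s₃ := h.slackBar_comp_sub_one_add hσ (i := 3) (by norm_num)
  rw [Nat.sub_add_cancel hl] at s₁
  rw [show (d a).2 - 1 + 2 = (d a).2 + 1 by omega] at s₂
  rw [show (d a).2 - 1 + 3 = (d a).2 + 2 by omega] at s₃
  exact ⟨hl, hN, _, ⟨σ, fun _ => rfl⟩, (posOrdered_iff_antitone _).2 hσ,
    h.deg_comp_eq_of_le_of_lt hσ _ (by omega) (by omega),
    h.deg_comp_eq_of_le_of_lt hσ _ (by omega) (by omega),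
    h.deg_comp_eq_of_le_of_lt hσ _ (by omega) (by omega),
    by simpa using s₀, by simpa using s₁, by simpa using s₂, by simpa using s₃⟩

theorem reverse (h : ForcedTriangle d G a b c) :
    ForcedTriangle (fun v => (d v).swap) G.rev a c b where
  realizes v := ⟨(h.realizes v).2, (h.realizes v).1⟩
  rigid H hH := by
    have := h.rigid H.rev fun v => ⟨(hH v).2, (hH v).1⟩
    simp only [InducesC3, SDigraph.rev] at this ⊢
    tauto
  ab := h.ca
  bc := h.bc
  ca := h.ab

end ForcedTriangle

theorem exists_forcedTriangle {N : ℕ} {d : Fin N → ℕ × ℕ} {G : SDigraph (Fin N)} {a b c : Fin N}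
    (hG : Realizes G d) (hrigid : ∀ H : SDigraph (Fin N), Realizes H d → InducesC3 H a b c) :
    ∃ b' c' : Fin N, ForcedTriangle d G a b' c' := by
  rcases hrigid G hG with ⟨hab, hbc, hca, -⟩ | ⟨hba, hcb, hac, -⟩
  · exact ⟨b, c, hG, hrigid, hab, hbc, hca⟩
  · refine ⟨c, b, hG, fun H hH => ?_, hac, hcb, hba⟩
    have := hrigid H hH
    unfold InducesC3 at this ⊢
    tauto

/-- degree-sequence criterion, necessity: if `d` is a
digraphic pair sequence and some three distinct coordinates induce a directed
3-cycle in every realization of `d`, then there are distinct coordinates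
`j₁, j₂, j₃` and `(k,l) ≥ (1,1)` with `d_{j₁} = d_{j₂} = d_{j₃} = (k,l)`, the
(1-based) coordinates `l, l+1, l+2` of the positive ordering `d̄` and
`k, k+1, k+2` of the negative ordering `d̲` all equal to `(k,l)`, and slacks
`(s̄_{l-1}, s̄_l, s̄_{l+1}, s̄_{l+2}) = (0,1,1,0) =
(s̲_{k-1}, s̲_k, s̲_{k+1}, s̲_{k+2})`. -/
theorem statement14 {N : ℕ} (d : Fin N → ℕ × ℕ)
    (hd : ∃ G : SDigraph (Fin N), Realizes G d)
    (hanchor : ∃ a b c : Fin N, a ≠ b ∧ b ≠ c ∧ a ≠ c ∧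
      ∀ G : SDigraph (Fin N), Realizes G d → InducesC3 G a b c) :
    ∃ (j₁ j₂ j₃ : Fin N) (k l : ℕ),
      j₁ ≠ j₂ ∧ j₂ ≠ j₃ ∧ j₁ ≠ j₃ ∧ 1 ≤ k ∧ 1 ≤ l ∧
      ∃ (hlN : l + 1 < N) (hkN : k + 1 < N),
        d j₁ = (k, l) ∧ d j₂ = (k, l) ∧ d j₃ = (k, l) ∧
        ∃ dbar dubar : Fin N → ℕ × ℕ,
          IsRearrangement d dbar ∧ PosOrdered dbar ∧
          IsRearrangement d dubar ∧ NegOrdered dubar ∧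
          dbar ⟨l - 1, by omega⟩ = (k, l) ∧
          dbar ⟨l, by omega⟩ = (k, l) ∧ dbar ⟨l + 1, by omega⟩ = (k, l) ∧
          dubar ⟨k - 1, by omega⟩ = (k, l) ∧
          dubar ⟨k, by omega⟩ = (k, l) ∧ dubar ⟨k + 1, by omega⟩ = (k, l) ∧
          slackBar dbar (l - 1) = 0 ∧ slackBar dbar l = 1 ∧
          slackBar dbar (l + 1) = 1 ∧ slackBar dbar (l + 2) = 0 ∧
          slackUbar dubar (k - 1) = 0 ∧ slackUbar dubar k = 1 ∧
          slackUbar dubar (k + 1) = 1 ∧ slackUbar dubar (k + 2) = 0 := by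
  obtain ⟨G, hG⟩ := hd
  obtain ⟨a, _, _, -, -, -, hrigid⟩ := hanchor
  obtain ⟨b, c, h⟩ := exists_forcedTriangle hG hrigid
  obtain ⟨hl, hlN, dbar, hre, hpos, e₁, e₂, e₃, s₁, s₂, s₃, s₄⟩ := h.exists_posOrdered
  obtain ⟨hk, hkN, dbar', ⟨σ, hσ⟩, hpos', e₁', e₂', e₃', s₁', s₂', s₃', s₄'⟩ :=
    h.reverse.exists_posOrdered
  -- `NegOrdered`, `slackUbar` of the swap of `dbar'` unfold to `PosOrdered`, `slackBar` of `dbar'`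
  refine ⟨a, b, c, (d a).1, (d a).2, h.ne_ab, h.ne_bc, h.ne_ac, hk, hl, hlN, hkN, rfl,
    h.deg_b, h.rotate.deg_b.trans h.deg_b, dbar, fun j => (dbar' j).swap, hre, hpos,
    ⟨σ, fun j => by simp [hσ]⟩, hpos', e₁, e₂, e₃, congrArg Prod.swap e₁',
    congrArg Prod.swap e₂', congrArg Prod.swap e₃',
    s₁, s₂, s₃, s₄, s₁', s₂', s₃', s₄'⟩
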